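/- arXiv:1603.09184 — 2 statements merged into one kernel-verified Lean document; each statement's English description precedes it below -/
import Mathlib

section
/- Let $p > 1$, $a \geq -2$ and $M \geq \max(3, a)$. Then $|a+M|^{p-2}(a+M) - |a|^{p-2}a \geq c_p M^{p-1}$, where $c_p > 0$ is a constant depending only on $p$ (one may take $c_p = \min(1, 3^{p-2})/3^{p-1}$ or any explicit positive constant valid for the given range). -/
/-! Write `q = p - 1 > 0`, so that `|t| ^ (p - 2) * t = t ^ q` for `t > 0`. If `a ≤ 0`, the
subtracted term is nonpositive and `a + M ≥ M - 2 ≥ M / 3`. If `0 < a ≤ M`, the increment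
`(a + M) ^ q - a ^ q` is at least `M ^ q` when `q ≥ 1` (superadditivity of `t ^ q`), and at least
`(2M) ^ q - M ^ q = (2 ^ q - 1) M ^ q` when `q ≤ 1`, because the increments of a concave function
over intervals of a fixed length decrease as the interval moves right. -/

open Real

theorem ConcaveOn.sub_le_sub_of_le {𝕜 : Type*} [Field 𝕜] [LinearOrder 𝕜] [IsStrictOrderedRing 𝕜]
    {s : Set 𝕜} {f : 𝕜 → 𝕜} (hf : ConcaveOn 𝕜 s f) {x y d : 𝕜} (hx : x ∈ s) (hyd : y + d ∈ s)
    (hxy : x ≤ y) (hd : 0 ≤ d) : f (y + d) - f y ≤ f (x + d) - f x := by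
  set D := y + d - x
  rcases (show 0 ≤ D by linarith).eq_or_lt with hD | hD
  · obtain rfl : d = 0 := by linarith
    obtain rfl : y = x := by linarith
    rfl
  -- `y` and `x + d` are the two convex combinations of `x` and `y + d` with swapped weights.
  have hsum : d / D + (y - x) / D = 1 := by rw [← add_div, div_eq_one_iff_eq hD.ne']; ring
  have hy : (d / D) • x + ((y - x) / D) • (y + d) = y := by
    simp only [smul_eq_mul]; field_simp; ring
  have hxd : ((y - x) / D) • x + (d / D) • (y + d) = x + d := by
    simp only [smul_eq_mul]; field_simp; ring
  have h₁ := hf.2 hx hyd (by positivity) (div_nonneg (sub_nonneg.2 hxy) hD.le) hsum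
  have h₂ := hf.2 hx hyd (div_nonneg (sub_nonneg.2 hxy) hD.le) (by positivity)
    ((add_comm _ _).trans hsum)
  rw [hy] at h₁
  rw [hxd] at h₂
  simp only [smul_eq_mul] at h₁ h₂
  linear_combination h₁ + h₂ - (f x + f (y + d)) * hsum

theorem Real.two_rpow_sub_one_mul_rpow_le_add_rpow_sub_rpow {q a M : ℝ} (hq₀ : 0 ≤ q)
    (hq₁ : q ≤ 1) (ha : 0 ≤ a) (haM : a ≤ M) :
    (2 ^ q - 1) * M ^ q ≤ (a + M) ^ q - a ^ q := by
  have hincr := (concaveOn_rpow hq₀ hq₁).sub_le_sub_of_le ha (show M + M ∈ Set.Ici 0 by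
    simp only [Set.mem_Ici]; linarith) haM (by linarith)
  rw [← two_mul, mul_rpow zero_le_two (by linarith)] at hincr
  linarith

theorem Real.min_mul_rpow_le_add_rpow_sub_rpow {q a M : ℝ} (hq : 0 ≤ q) (ha : 0 ≤ a)
    (haM : a ≤ M) : min 1 (2 ^ q - 1) * M ^ q ≤ (a + M) ^ q - a ^ q := by
  have hM : 0 ≤ M ^ q := rpow_nonneg (ha.trans haM) q
  rcases le_total q 1 with hq₁ | hq₁
  · calc min 1 (2 ^ q - 1) * M ^ q ≤ (2 ^ q - 1) * M ^ q := by gcongr; exact min_le_right _ _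
      _ ≤ _ := two_rpow_sub_one_mul_rpow_le_add_rpow_sub_rpow hq hq₁ ha haM
  · calc min 1 (2 ^ q - 1) * M ^ q ≤ 1 * M ^ q := by gcongr; exact min_le_left _ _
      _ ≤ _ := by linarith [add_rpow_le_rpow_add ha (ha.trans haM) hq₁]

theorem Real.abs_rpow_sub_two_mul_self {p t : ℝ} (ht : 0 < t) :
    |t| ^ (p - 2) * t = t ^ (p - 1) := by
  rw [abs_of_pos ht, ← rpow_add_one ht.ne']
  ring_nf

/-- For `p > 1`, there is a constant `c_p > 0` (depending only on `p`)
such that for all `a ≥ -2` and `M ≥ max 3 a`,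
`|a+M|^(p-2)(a+M) - |a|^(p-2) a ≥ c_p M^(p-1)`. -/
theorem stmt_0 (p : ℝ) (hp : 1 < p) :
    ∃ c : ℝ, 0 < c ∧ ∀ a M : ℝ, -2 ≤ a → max 3 a ≤ M →
      c * M ^ (p - 1) ≤ |a + M| ^ (p - 2) * (a + M) - |a| ^ (p - 2) * a := by
  have hq : 0 < p - 1 := by linarith
  set c := min ((1 / 3 : ℝ) ^ (p - 1)) (min 1 (2 ^ (p - 1) - 1))
  refine ⟨c, lt_min (by positivity) (lt_min one_pos (sub_pos.2 (one_lt_rpow one_lt_two hq))), ?_⟩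
  intro a M ha hM
  obtain ⟨hM3, haM⟩ := max_le_iff.1 hM
  rw [abs_rpow_sub_two_mul_self (by linarith : 0 < a + M)]
  rcases le_or_gt a 0 with ha₀ | ha₀
  · have hneg : |a| ^ (p - 2) * a ≤ 0 := mul_nonpos_of_nonneg_of_nonpos (by positivity) ha₀
    calc c * M ^ (p - 1) ≤ (1 / 3) ^ (p - 1) * M ^ (p - 1) := by gcongr; exact min_le_left _ _
      _ = (M / 3) ^ (p - 1) := by rw [← mul_rpow (by norm_num) (by linarith)]; ring_nf
      _ ≤ (a + M) ^ (p - 1) := by gcongr; linarith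
      _ ≤ _ := by linarith
  · rw [abs_rpow_sub_two_mul_self ha₀]
    calc c * M ^ (p - 1) ≤ min 1 (2 ^ (p - 1) - 1) * M ^ (p - 1) := by
          gcongr; exact min_le_right _ _
      _ ≤ _ := min_mul_rpow_le_add_rpow_sub_rpow hq.le ha₀.le haM
end

section
/- Let $0 < s < 1$, $1 < p < \infty$, and $0 < \beta < s$. Then the integral $\int_0^1 \left(t^{p(s-\beta)} - 1\right)(1-t^{\beta})^{p-2}\, t^{\beta-1}\, (1-t)^{-sp}\, dt$ converges absolutely and is strictly negative. -/
/-!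
Near `t = 1` Bernoulli's inequality gives `1 - t ^ a ≤ max 1 a * (1 - t)` and
`(1 - t ^ β) ^ r ≍ (1 - t) ^ r`, so the integrand is dominated by the Beta integrand
`t ^ (β - 1) * (1 - t) ^ (p (1 - s) - 1)`, which is integrable because `β > 0` and
`p (1 - s) > 0`. For `0 < t < 1` every factor is positive except `t ^ (p (s - β)) - 1 < 0`.
-/

open MeasureTheory Real Set

theorem intervalIntegrable_rpow_mul_one_sub_rpow {u v : ℝ} (hu : 0 < u) (hv : 0 < v) :
    IntervalIntegrable (fun t : ℝ => t ^ (u - 1) * (1 - t) ^ (v - 1)) volume 0 1 := by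
  have hre : IntegrableOn
      (fun t : ℝ => RCLike.re ((t : ℂ) ^ ((u : ℂ) - 1) * (1 - (t : ℂ)) ^ ((v : ℂ) - 1)))
      (uIoc 0 1) := (Complex.betaIntegral_convergent (by simpa) (by simpa)).def'.re
  refine intervalIntegrable_iff.mpr (hre.congr_fun (fun t ht => ?_) measurableSet_uIoc)
  rw [uIoc_of_le zero_le_one] at ht
  have hcast : ((t ^ (u - 1) * (1 - t) ^ (v - 1) : ℝ) : ℂ)
      = (t : ℂ) ^ ((u : ℂ) - 1) * (1 - (t : ℂ)) ^ ((v : ℂ) - 1) := by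
    push_cast [Complex.ofReal_cpow ht.1.le, Complex.ofReal_cpow (sub_nonneg.mpr ht.2)]
    rfl
  simp only [RCLike.re_to_complex, ← hcast, Complex.ofReal_re]

section Bernoulli

variable {t : ℝ}

theorem one_sub_rpow_le_max_mul (ht0 : 0 < t) (ht1 : t ≤ 1) (a : ℝ) :
    1 - t ^ a ≤ max 1 a * (1 - t) := by
  have hbern : 1 + max 1 a * (t - 1) ≤ (1 + (t - 1)) ^ max 1 a :=
    one_add_mul_self_le_rpow_one_add (by linarith) (le_max_left _ _)
  rw [add_sub_cancel] at hbern
  have hmono : t ^ max 1 a ≤ t ^ a := rpow_le_rpow_of_exponent_ge ht0 ht1 (le_max_right _ _)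
  linarith

theorem mul_one_sub_le_one_sub_rpow (ht : 0 ≤ t) {β : ℝ} (hβ0 : 0 ≤ β) (hβ1 : β ≤ 1) :
    β * (1 - t) ≤ 1 - t ^ β := by
  have hbern : (1 + (t - 1)) ^ β ≤ 1 + β * (t - 1) :=
    rpow_one_add_le_one_add_mul_self (by linarith) hβ0 hβ1
  rw [add_sub_cancel] at hbern
  linarith

/-- Raise `1 - t ^ β ≤ 1 - t` to `r ≥ 0`, and `β (1 - t) ≤ 1 - t ^ β` to `r < 0`. -/
theorem one_sub_rpow_rpow_le (ht0 : 0 < t) (ht1 : t < 1) {β : ℝ} (hβ0 : 0 < β) (hβ1 : β ≤ 1)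
    (r : ℝ) : (1 - t ^ β) ^ r ≤ max 1 (β ^ r) * (1 - t) ^ r := by
  have h1t : 0 < 1 - t := by linarith
  rcases le_or_gt 0 r with hr | hr
  · have hle : 1 - t ^ β ≤ 1 - t := by linarith [self_le_rpow_of_le_one ht0.le ht1.le hβ1]
    calc (1 - t ^ β) ^ r ≤ (1 - t) ^ r :=
          rpow_le_rpow (by linarith [rpow_lt_one ht0.le ht1 hβ0]) hle hr
      _ ≤ max 1 (β ^ r) * (1 - t) ^ r :=
          le_mul_of_one_le_left (rpow_nonneg h1t.le _) (le_max_left _ _)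
  · calc (1 - t ^ β) ^ r ≤ (β * (1 - t)) ^ r :=
          rpow_le_rpow_of_nonpos (mul_pos hβ0 h1t)
            (mul_one_sub_le_one_sub_rpow ht0.le hβ0.le hβ1) hr.le
      _ = β ^ r * (1 - t) ^ r := mul_rpow hβ0.le h1t.le
      _ ≤ max 1 (β ^ r) * (1 - t) ^ r :=
          mul_le_mul_of_nonneg_right (le_max_right _ _) (rpow_nonneg h1t.le _)

end Bernoulli

section Integrand

variable {t a β : ℝ}

theorem rpow_sub_one_mul_neg (ht0 : 0 < t) (ht1 : t < 1) (ha : 0 < a) (hβ : 0 < β) (r c : ℝ) :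
    (t ^ a - 1) * (1 - t ^ β) ^ r * t ^ (β - 1) * (1 - t) ^ c < 0 := by
  have hfactor : 0 < (1 - t ^ β) ^ r * t ^ (β - 1) * (1 - t) ^ c := by
    have := rpow_lt_one ht0.le ht1 hβ
    have : 0 < 1 - t := by linarith
    positivity
  have hneg : t ^ a - 1 < 0 := by linarith [rpow_lt_one ht0.le ht1 ha]
  simpa only [mul_assoc] using mul_neg_of_neg_of_pos hneg hfactor

/-- The vanishing of `t ^ a - 1` at `t = 1` gains one power of `1 - t`. -/
theorem abs_rpow_sub_one_mul_le (ht0 : 0 < t) (ht1 : t < 1) (ha : 0 ≤ a) (hβ0 : 0 < β)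
    (hβ1 : β ≤ 1) (r c : ℝ) :
    |(t ^ a - 1) * (1 - t ^ β) ^ r * t ^ (β - 1) * (1 - t) ^ c|
      ≤ max 1 a * max 1 (β ^ r) * (t ^ (β - 1) * (1 - t) ^ (r + 1 + c)) := by
  have h1t : 0 < 1 - t := by linarith
  have hβt : 0 < 1 - t ^ β := by linarith [rpow_lt_one ht0.le ht1 hβ0]
  have habs : |t ^ a - 1| = 1 - t ^ a := by
    rw [abs_sub_comm, abs_of_nonneg (by linarith [rpow_le_one ht0.le ht1.le ha])]
  have hsplit : (1 - t) ^ (r + 1 + c) = (1 - t) * (1 - t) ^ r * (1 - t) ^ c := by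
    rw [rpow_add h1t, rpow_add h1t, rpow_one]; ring
  rw [abs_mul, abs_mul, abs_mul, habs, abs_of_pos (rpow_pos_of_pos hβt _),
    abs_of_pos (rpow_pos_of_pos ht0 _), abs_of_pos (rpow_pos_of_pos h1t _), hsplit]
  have hmain : (1 - t ^ a) * (1 - t ^ β) ^ r ≤ max 1 a * (1 - t) * (max 1 (β ^ r) * (1 - t) ^ r) :=
    mul_le_mul (one_sub_rpow_le_max_mul ht0 ht1.le a) (one_sub_rpow_rpow_le ht0 ht1 hβ0 hβ1 r)
      (rpow_nonneg hβt.le _) (by positivity)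
  calc (1 - t ^ a) * (1 - t ^ β) ^ r * t ^ (β - 1) * (1 - t) ^ c
      = (1 - t ^ a) * (1 - t ^ β) ^ r * (t ^ (β - 1) * (1 - t) ^ c) := by ring
    _ ≤ max 1 a * (1 - t) * (max 1 (β ^ r) * (1 - t) ^ r) * (t ^ (β - 1) * (1 - t) ^ c) :=
        mul_le_mul_of_nonneg_right hmain (by positivity)
    _ = _ := by ring

end Integrand

theorem stmt_5_general (s p β : ℝ) (hs1 : s < 1) (hp : 1 < p)
    (hβ0 : 0 < β) (hβs : β < s) :
    IntervalIntegrable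
      (fun t => (t ^ (p * (s - β)) - 1) * (1 - t ^ β) ^ (p - 2) * t ^ (β - 1)
        * (1 - t) ^ (-(s * p))) volume 0 1 ∧
    (∫ t in (0:ℝ)..1, (t ^ (p * (s - β)) - 1) * (1 - t ^ β) ^ (p - 2) * t ^ (β - 1)
        * (1 - t) ^ (-(s * p))) < 0 := by
  set f : ℝ → ℝ := fun t => (t ^ (p * (s - β)) - 1) * (1 - t ^ β) ^ (p - 2) * t ^ (β - 1)
    * (1 - t) ^ (-(s * p))
  have ha : 0 < p * (s - β) := mul_pos (by linarith) (by linarith)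
  have hmajorant : IntegrableOn (fun t => max 1 (p * (s - β)) * max 1 (β ^ (p - 2))
      * (t ^ (β - 1) * (1 - t) ^ (p - 2 + 1 + -(s * p)))) (Ioo 0 1) := by
    have hv : 0 < p * (1 - s) := mul_pos (by linarith) (by linarith)
    have := (intervalIntegrable_rpow_mul_one_sub_rpow hβ0 hv).const_mul
      (max 1 (p * (s - β)) * max 1 (β ^ (p - 2)))
    rw [intervalIntegrable_iff_integrableOn_Ioo_of_le zero_le_one] at this
    rwa [show p - 2 + 1 + -(s * p) = p * (1 - s) - 1 by ring]
  have hf : IntervalIntegrable f volume 0 1 := by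
    rw [intervalIntegrable_iff_integrableOn_Ioo_of_le zero_le_one]
    refine hmajorant.mono' (by fun_prop) ((ae_restrict_iff' measurableSet_Ioo).mpr
      (ae_of_all _ fun t ht => ?_))
    exact abs_rpow_sub_one_mul_le ht.1 ht.2 ha.le hβ0 (hβs.trans hs1).le _ _
  refine ⟨hf, ?_⟩
  have hpos : 0 < ∫ t in (0:ℝ)..1, -f t :=
    intervalIntegral.intervalIntegral_pos_of_pos_on hf.neg
      (fun t ht => neg_pos.mpr (rpow_sub_one_mul_neg ht.1 ht.2 ha hβ0 _ _)) zero_lt_one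
  rw [intervalIntegral.integral_neg] at hpos
  linarith

/-- For `0 < β < s < 1`, `1 < p`, the integral
`∫_0^1 (t^{p(s-β)} - 1)(1-t^β)^{p-2} t^{β-1} (1-t)^{-sp} dt`
converges absolutely and is strictly negative. -/
theorem stmt_5 (s p β : ℝ) (hs0 : 0 < s) (hs1 : s < 1) (hp : 1 < p)
    (hβ0 : 0 < β) (hβs : β < s) :
    IntervalIntegrable
      (fun t => (t ^ (p * (s - β)) - 1) * (1 - t ^ β) ^ (p - 2) * t ^ (β - 1)
        * (1 - t) ^ (-(s * p))) volume 0 1 ∧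
    (∫ t in (0:ℝ)..1, (t ^ (p * (s - β)) - 1) * (1 - t ^ β) ^ (p - 2) * t ^ (β - 1)
        * (1 - t) ^ (-(s * p))) < 0 :=
  stmt_5_general s p β hs1 hp hβ0 hβs
end
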